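/- Let B be a skew brace of nilpotent type. If B is both left nilpotent and right nilpotent, then the multiplicative group (B,∘) is a nilpotent group. -/

import Mathlib

/-- A skew brace: a type with two group structures `(B,+)` and `(B,∘)`
(the multiplicative group is written with `*`) sharing the same underlying set,
such that `a ∘ (b + c) = a ∘ b - a + a ∘ c`. -/
class SkewBrace (B : Type*) extends AddGroup B, Group B where
  circ_add : ∀ a b c : B, a * (b + c) = a * b - a + a * c

namespace SkewBrace

variable {B : Type*} [SkewBrace B]

/-- `lam a b = -a + a ∘ b`, i.e. `λ_a(b)`. -/
def lam (a b : B) : B := -a + a * b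

/-- `a * b` (the star operation) `= λ_a(b) - b = -a + a ∘ b - b`. -/
def starOp (a b : B) : B := -a + a * b - b

/-- `X * Y` : the additive subgroup generated by all `x * y`, `x ∈ X`, `y ∈ Y`,
regarded as a set. -/
def starSpan (X Y : Set B) : Set B :=
  (AddSubgroup.closure {z : B | ∃ x ∈ X, ∃ y ∈ Y, z = starOp x y} : AddSubgroup B)

/-- `[X,Y]₊` : the additive subgroup generated by all additive commutators
`x + y - x - y`, `x ∈ X`, `y ∈ Y`, regarded as a set. -/
def addCommSpan (X Y : Set B) : Set B :=
  (AddSubgroup.closure {z : B | ∃ x ∈ X, ∃ y ∈ Y, z = x + y - x - y} : AddSubgroup B)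

/-- A sub skew brace: a subset containing `0` and closed under both group
operations and both inverses. -/
def IsSubSkewBrace (S : Set B) : Prop :=
  0 ∈ S ∧ (∀ a ∈ S, ∀ b ∈ S, a + b ∈ S) ∧ (∀ a ∈ S, -a ∈ S) ∧
    (∀ a ∈ S, ∀ b ∈ S, a * b ∈ S) ∧ (∀ a ∈ S, a⁻¹ ∈ S)

/-- An ideal: a sub skew brace that is normal in `(B,+)` and in `(B,∘)` and
invariant under all `λ_a`. -/
def IsIdeal (S : Set B) : Prop :=
  IsSubSkewBrace S ∧ (∀ a : B, ∀ i ∈ S, a + i - a ∈ S) ∧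
    (∀ a : B, ∀ i ∈ S, a * i * a⁻¹ ∈ S) ∧ (∀ a : B, ∀ i ∈ S, lam a i ∈ S)

/-- The annihilator `Ann(B) = {x | x∘a = a∘x = x+a = a+x for all a}`. -/
def annSet (B : Type*) [SkewBrace B] : Set B :=
  {x | ∀ a : B, x * a = a * x ∧ x * a = x + a ∧ x + a = a + x}

/-- The annihilator series: `Ann₀(B) = 0` and `Ann_{n+1}(B)` is the preimage of
`Ann(B/Annₙ(B))` under the quotient map; membership is expressed via coset
equalities modulo `Annₙ(B)`. -/
def annSeries (B : Type*) [SkewBrace B] : ℕ → Set B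
  | 0 => {0}
  | n + 1 => {x | ∀ a : B,
      x * a - a * x ∈ annSeries B n ∧
      x * a - (x + a) ∈ annSeries B n ∧
      (x + a) - (a + x) ∈ annSeries B n}

/-- `B` is annihilator nilpotent if `Annₙ(B) = B` for some `n`. -/
def AnnNilpotent (B : Type*) [SkewBrace B] : Prop :=
  ∃ n : ℕ, annSeries B n = Set.univ

/-- `leftPow B n` is `B^{n+1}`: `B¹ = B`, `B^{n+1} = B * Bⁿ`. -/
def leftPow (B : Type*) [SkewBrace B] : ℕ → Set B
  | 0 => Set.univ
  | n + 1 => starSpan Set.univ (leftPow B n)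

/-- `rightPow B n` is `B⁽ⁿ⁺¹⁾`: `B⁽¹⁾ = B`, `B⁽ⁿ⁺¹⁾ = B⁽ⁿ⁾ * B`. -/
def rightPow (B : Type*) [SkewBrace B] : ℕ → Set B
  | 0 => Set.univ
  | n + 1 => starSpan (rightPow B n) Set.univ

/-- `B` is left nilpotent if `Bⁿ = 0` for some `n ≥ 1`. -/
def LeftNilpotent (B : Type*) [SkewBrace B] : Prop :=
  ∃ n : ℕ, leftPow B n = ({0} : Set B)

/-- `B` is right nilpotent if `B⁽ⁿ⁾ = 0` for some `n ≥ 1`. -/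
def RightNilpotent (B : Type*) [SkewBrace B] : Prop :=
  ∃ n : ℕ, rightPow B n = ({0} : Set B)

/-- `strongPow B n` is `B^[n+1]`: `B^[1] = B`, and `B^[n+1]` is the additive
subgroup generated by `⋃_{i=1}^{n} B^[i] * B^[n+1-i]`. -/
def strongPow (B : Type*) [SkewBrace B] : ℕ → Set B
  | 0 => Set.univ
  | n + 1 => (AddSubgroup.closure (⋃ j : Fin (n + 1),
      {z : B | ∃ x ∈ strongPow B j.1, ∃ y ∈ strongPow B (n - j.1), z = starOp x y}) :
        AddSubgroup B)
  decreasing_by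
  · exact j.isLt
  · omega

/-- `B` is strongly nilpotent if `B^[n] = 0` for some `n ≥ 1`. -/
def StronglyNilpotent (B : Type*) [SkewBrace B] : Prop :=
  ∃ n : ℕ, strongPow B n = ({0} : Set B)

/-- `gammaAux B n` is `Γ_[n+1](B)`: `Γ_[1](B) = B` and, for `n ≥ 2`, `Γ_[n](B)` is
the additive subgroup generated by the sets `Γ_[i](B) * Γ_[n-i](B)` and
`[Γ_[i](B), Γ_[n-i](B)]₊` for `1 ≤ i ≤ n-1`. -/
def gammaAux (B : Type*) [SkewBrace B] : ℕ → Set B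
  | 0 => Set.univ
  | n + 1 => (AddSubgroup.closure (⋃ j : Fin (n + 1),
      {z : B | ∃ x ∈ gammaAux B j.1, ∃ y ∈ gammaAux B (n - j.1),
        z = starOp x y ∨ z = x + y - x - y}) : AddSubgroup B)
  decreasing_by
  · exact j.isLt
  · omega

/-- `Γ_[n](B)` for `n ≥ 1` (one-based indexing as in the paper). -/
def gammaBr (B : Type*) [SkewBrace B] (n : ℕ) : Set B := gammaAux B (n - 1)

/-- `B` is finitely generated as a skew brace: there is a finite subset whose
smallest containing sub skew brace is `B` itself. -/
def SBFinitelyGenerated (B : Type*) [SkewBrace B] : Prop :=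
  ∃ S : Set B, S.Finite ∧ ∀ T : Set B, IsSubSkewBrace T → S ⊆ T → T = Set.univ

/-- `B` satisfies the ascending chain condition on sub skew braces. -/
def ACCSubSkewBrace (B : Type*) [SkewBrace B] : Prop :=
  ∀ f : ℕ → Set B, (∀ n, IsSubSkewBrace (f n)) → (∀ n, f n ⊆ f (n + 1)) →
    ∃ N : ℕ, ∀ n, N ≤ n → f n = f N


/-!
The sets `Γ_[n]` form a descending series of additive subgroups closed under `∘`, inverses and
`λ`, and it is central for `(B,∘)`: modulo `Γ_[n+1]`, an element `x ∈ Γ_[n]` satisfies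
`x ∘ g ≡ x + g ≡ g + x ≡ g ∘ x`. So it suffices to show `Γ_[n] = 0` for some `n`, and by right
nilpotency it suffices to push some `Γ_[n]` into each `B⁽ᵏ⁾`, by induction on `k`.

For the step, refine the lower central series `γ` of `(B,+)` by the left powers,
`U_{j,p} = γ_{j+1} + (B^p ∩ γ_j)`: then `B * U_{j,p}` and `[B, U_{j,p}]₊` lie in `U_{j,p+1}`,
and since `(B,+)` is nilpotent and `B` is left nilpotent, the chain of the `U_{j,p}` leads from
`B` to `0`. If `Γ_[m] ⊆ B⁽ᵏ⁾` and `Γ_[m] ⊆ U_{j,p} + B⁽ᵏ⁺¹⁾`, then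
`Γ_[2m] ⊆ U_{j,p+1} + B⁽ᵏ⁺¹⁾`, because every generator of `Γ_[2m]` has a factor in `Γ_[m]`:
on the right it is absorbed by the step of `U`, on the left it gives
`Γ_[m] * B ⊆ B⁽ᵏ⁾ * B = B⁽ᵏ⁺¹⁾`.
-/

theorem _root_.AddSubgroup.normal_closure_of_add_neg_mem {G : Type*} [AddGroup G] {S : Set G}
    (h : ∀ s ∈ S, ∀ c : G, c + s + -c ∈ AddSubgroup.closure S) :
    (AddSubgroup.closure S).Normal := by
  refine ⟨fun x hx c => ?_⟩
  induction hx using AddSubgroup.closure_induction with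
  | mem s hs => exact h s hs c
  | zero => simp
  | add x y _ _ hx hy =>
    simpa only [add_assoc, neg_add_cancel_left] using add_mem hx hy
  | neg x _ hx => simpa only [neg_add_rev, neg_neg, add_assoc] using neg_mem hx

theorem one_eq_zero : (1 : B) = 0 := by
  have h := circ_add (1 : B) 0 0
  simp only [add_zero, one_mul, zero_sub] at h
  exact neg_eq_zero.mp h.symm

theorem mul_eq_add_lam (a b : B) : a * b = a + lam a b := by
  simp [lam]

theorem lam_add (a b c : B) : lam a (b + c) = lam a b + lam a c := by
  simp only [lam, circ_add, sub_eq_add_neg, add_assoc]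

def lamHom (a : B) : B →+ B := AddMonoidHom.mk' (lam a) (lam_add a)

@[simp]
theorem lamHom_apply (a b : B) : lamHom a b = lam a b := rfl

theorem lam_zero (a : B) : lam a 0 = 0 := (lamHom a).map_zero

theorem lam_neg (a b : B) : lam a (-b) = -lam a b := (lamHom a).map_neg b

theorem lam_sub (a b c : B) : lam a (b - c) = lam a b - lam a c := (lamHom a).map_sub b c

theorem lam_mul (a b c : B) : lam (a * b) c = lam a (lam b c) := by
  have h : lam a (lam b c) = -lam a b + lam a (b * c) := by
    rw [show lam b c = -b + b * c from rfl, lam_add, lam_neg]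
  rw [h]
  simp only [lam, mul_assoc, neg_add_rev, neg_neg, add_assoc, add_neg_cancel_left]

theorem lam_one (b : B) : lam 1 b = b := by
  simp [lam, one_eq_zero]

theorem lam_self_inv (a : B) : lam a a⁻¹ = -a := by
  simp [lam, one_eq_zero]

theorem mul_lam_inv (c t : B) : c * lam c⁻¹ t = c + t := by
  rw [mul_eq_add_lam, ← lam_mul, mul_inv_cancel, lam_one]

theorem inv_eq_lam_inv_neg (a : B) : a⁻¹ = lam a⁻¹ (-a) := by
  rw [← lam_self_inv, ← lam_mul, inv_mul_cancel, lam_one]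

theorem starOp_eq_lam_sub (a b : B) : starOp a b = lam a b - b := rfl

theorem starOp_zero (a : B) : starOp a 0 = 0 := by
  rw [starOp_eq_lam_sub, lam_zero, sub_zero]

theorem lam_eq_starOp_add (a b : B) : lam a b = starOp a b + b := by
  simp [lam, starOp]

theorem starOp_add (a x y : B) :
    starOp a (x + y) = starOp a x + (x + starOp a y + -x) := by
  simp only [starOp, ← lam.eq_def, lam_add, sub_eq_add_neg, neg_add_rev, add_assoc,
    neg_add_cancel_left]

theorem starOp_neg (a x : B) : starOp a (-x) = -x + -starOp a x + - -x := by
  simp only [starOp, ← lam.eq_def, lam_neg, sub_eq_add_neg, neg_add_rev, neg_neg,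
    neg_add_cancel_left]

theorem add_starOp_add_neg (a c y : B) :
    c + starOp a y + -c = -starOp a c + starOp a (c + y) := by
  simp only [starOp_add, neg_add_cancel_left]

theorem lam_starOp (a x y : B) :
    lam a (starOp x y) = starOp (a * x * a⁻¹) (lam a y) := by
  simp only [starOp, ← lam.eq_def, lam_sub, ← lam_mul, inv_mul_cancel_right]

theorem mul_mul_inv_eq (a u : B) :
    a * u * a⁻¹ = a + (lam a u + lam a (starOp u a⁻¹)) + -a := by
  rw [mul_eq_add_lam (a * u), lam_mul, mul_eq_add_lam a u, lam_eq_starOp_add u a⁻¹, lam_add,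
    lam_self_inv]
  simp only [add_assoc]

section LamInvariant

variable {N : AddSubgroup B}

theorem mul_mem_of_lam_mem (hN : ∀ a, ∀ x ∈ N, lam a x ∈ N) {x y : B} (hx : x ∈ N)
    (hy : y ∈ N) : x * y ∈ N := by
  rw [mul_eq_add_lam]
  exact add_mem hx (hN x y hy)

theorem inv_mem_of_lam_mem (hN : ∀ a, ∀ x ∈ N, lam a x ∈ N) {x : B} (hx : x ∈ N) :
    x⁻¹ ∈ N := by
  rw [inv_eq_lam_inv_neg]
  exact hN _ _ (neg_mem hx)

theorem mul_mul_inv_mem_of_lam_mem [hnormal : N.Normal] (hN : ∀ a, ∀ x ∈ N, lam a x ∈ N)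
    (hstar : ∀ x ∈ N, ∀ b, starOp x b ∈ N) (a : B) {u : B} (hu : u ∈ N) :
    a * u * a⁻¹ ∈ N := by
  rw [mul_mul_inv_eq]
  exact hnormal.conj_mem _ (add_mem (hN a u hu) (hN a _ (hstar u hu a⁻¹))) a

theorem mul_inv_mem_of_neg_add_mem (hN : ∀ a, ∀ x ∈ N, lam a x ∈ N)
    (hconj : ∀ a, ∀ u ∈ N, a * u * a⁻¹ ∈ N) {a c : B} (h : -c + a ∈ N) : a * c⁻¹ ∈ N := by
  have ha : c * lam c⁻¹ (-c + a) = a := by rw [mul_lam_inv, add_neg_cancel_left]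
  rw [← ha]
  exact hconj c _ (hN _ _ h)

end LamInvariant

def StarCommInto (A A' : AddSubgroup B) : Prop :=
  ∀ a ∈ A, ∀ b : B, starOp b a ∈ A' ∧ b + a - b - a ∈ A'

theorem starCommInto_closure {S : Set B} {A' : AddSubgroup B} [hA' : A'.Normal]
    (h : ∀ s ∈ S, ∀ b : B, starOp b s ∈ A' ∧ b + s - b - s ∈ A') :
    StarCommInto (AddSubgroup.closure S) A' := by
  intro x hx b
  induction hx using AddSubgroup.closure_induction with
  | mem s hs => exact h s hs b
  | zero => simp [starOp_zero]
  | add x y _ _ hx hy =>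
    constructor
    · rw [starOp_add]
      exact add_mem hx.1 (hA'.conj_mem _ hy.1 x)
    · have e : b + (x + y) - b - (x + y) = (b + x - b - x) + (x + (b + y - b - y) + -x) := by
        simp only [sub_eq_add_neg, neg_add_rev, add_assoc, neg_add_cancel_left]
      rw [e]
      exact add_mem hx.2 (hA'.conj_mem _ hy.2 x)
  | neg x _ hx =>
    constructor
    · rw [starOp_neg]
      exact hA'.conj_mem _ (neg_mem hx.1) (-x)
    · have e : b + -x - b - -x = -x + -(b + x - b - x) + - -x := by
        simp only [sub_eq_add_neg, neg_add_rev, neg_neg, add_assoc, neg_add_cancel_left]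
      rw [e]
      exact hA'.conj_mem _ (neg_mem hx.2) (-x)

theorem StarCommInto.sup {A A' C C' : AddSubgroup B} [(A' ⊔ C').Normal]
    (hA : StarCommInto A A') (hC : StarCommInto C C') : StarCommInto (A ⊔ C) (A' ⊔ C') := by
  rw [AddSubgroup.sup_eq_closure]
  refine starCommInto_closure fun s hs b => ?_
  rcases hs with hs | hs
  · exact ⟨AddSubgroup.mem_sup_left (hA s hs b).1, AddSubgroup.mem_sup_left (hA s hs b).2⟩
  · exact ⟨AddSubgroup.mem_sup_right (hC s hs b).1, AddSubgroup.mem_sup_right (hC s hs b).2⟩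

theorem starCommInto_self {N : AddSubgroup B} [hN : N.Normal] (hlam : ∀ a, ∀ x ∈ N, lam a x ∈ N) :
    StarCommInto N N := fun x hx b =>
  ⟨sub_mem (hlam b x hx) hx, sub_mem (by simpa [sub_eq_add_neg] using hN.conj_mem x hx b) hx⟩

/-- `Γ_[n+1](B)` as an additive subgroup. -/
def gammaSub (B : Type*) [SkewBrace B] (n : ℕ) : AddSubgroup B :=
  AddSubgroup.closure (gammaAux B n)

theorem coe_gammaSub (n : ℕ) : (gammaSub B n : Set B) = gammaAux B n := by
  cases n <;> rw [gammaSub, gammaAux] <;> simp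

theorem gammaSub_zero : gammaSub B 0 = ⊤ :=
  SetLike.coe_injective (by rw [coe_gammaSub, gammaAux]; rfl)

theorem mem_gammaSub_zero (x : B) : x ∈ gammaSub B 0 := by
  rw [gammaSub_zero]; trivial

theorem gammaSub_succ (n : ℕ) : gammaSub B (n + 1) = AddSubgroup.closure (⋃ j : Fin (n + 1),
    {z : B | ∃ x ∈ gammaSub B j.1, ∃ y ∈ gammaSub B (n - j.1),
      z = starOp x y ∨ z = x + y - x - y}) := by
  simp only [SetLike.mem_coe.symm, coe_gammaSub]
  rw [gammaSub, gammaAux, AddSubgroup.closure_eq]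

theorem starOp_mem_gammaSub {i j : ℕ} {x y : B} (hx : x ∈ gammaSub B i)
    (hy : y ∈ gammaSub B j) : starOp x y ∈ gammaSub B (i + j + 1) := by
  rw [gammaSub_succ]
  exact AddSubgroup.subset_closure
    (Set.mem_iUnion.mpr ⟨⟨i, by omega⟩, x, hx, y, by simpa, .inl rfl⟩)

theorem add_sub_sub_mem_gammaSub {i j : ℕ} {x y : B} (hx : x ∈ gammaSub B i)
    (hy : y ∈ gammaSub B j) : x + y - x - y ∈ gammaSub B (i + j + 1) := by
  rw [gammaSub_succ]
  exact AddSubgroup.subset_closure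
    (Set.mem_iUnion.mpr ⟨⟨i, by omega⟩, x, hx, y, by simpa, .inr rfl⟩)

theorem gammaSub_succ_le {n : ℕ} {A : AddSubgroup B}
    (h : ∀ i ≤ n, ∀ x ∈ gammaSub B i, ∀ y ∈ gammaSub B (n - i),
      starOp x y ∈ A ∧ x + y - x - y ∈ A) :
    gammaSub B (n + 1) ≤ A := by
  rw [gammaSub_succ, AddSubgroup.closure_le]
  rintro z ⟨-, ⟨⟨i, hi⟩, rfl⟩, x, hx, y, hy, rfl | rfl⟩
  · exact (h i (by omega) x hx y hy).1
  · exact (h i (by omega) x hx y hy).2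

theorem gammaSub_succ_le_self (n : ℕ) : gammaSub B (n + 1) ≤ gammaSub B n := by
  induction n using Nat.strong_induction_on with
  | _ n ih =>
    rcases n with _ | n
    · exact gammaSub_zero (B := B) ▸ le_top
    refine gammaSub_succ_le fun i hi x hx y hy => ?_
    rcases i with _ | i
    · have hy' : y ∈ gammaSub B n := ih n (by omega) hy
      exact ⟨by simpa using starOp_mem_gammaSub hx hy',
        by simpa using add_sub_sub_mem_gammaSub hx hy'⟩
    · have hx' : x ∈ gammaSub B i := ih i (by omega) hx
      have e : i + (n + 1 - (i + 1)) + 1 = n + 1 := by omega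
      exact ⟨e ▸ starOp_mem_gammaSub hx' hy, e ▸ add_sub_sub_mem_gammaSub hx' hy⟩

theorem gammaSub_antitone : Antitone (gammaSub B) :=
  antitone_nat_of_succ_le gammaSub_succ_le_self

theorem starOp_mem_gammaSub_of_mem_right {n : ℕ} (b : B) {x : B} (hx : x ∈ gammaSub B n) :
    starOp b x ∈ gammaSub B n :=
  gammaSub_antitone (by omega) (starOp_mem_gammaSub (mem_gammaSub_zero _) hx)

theorem starOp_mem_gammaSub_of_mem_left {n : ℕ} {x : B} (hx : x ∈ gammaSub B n) (b : B) :
    starOp x b ∈ gammaSub B n :=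
  gammaSub_antitone (by omega) (starOp_mem_gammaSub hx (mem_gammaSub_zero _))

theorem add_sub_sub_mem_gammaSub_succ {n : ℕ} (c : B) {x : B} (hx : x ∈ gammaSub B n) :
    c + x - c - x ∈ gammaSub B (n + 1) := by
  simpa using add_sub_sub_mem_gammaSub (mem_gammaSub_zero _) hx

instance gammaSub_normal (n : ℕ) : (gammaSub B n).Normal where
  conj_mem x hx c := by
    have h := add_mem (gammaSub_succ_le_self n (add_sub_sub_mem_gammaSub_succ c hx)) hx
    rwa [sub_add_cancel, sub_eq_add_neg] at h

theorem lam_mem_gammaSub {n : ℕ} (a : B) {x : B} (hx : x ∈ gammaSub B n) :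
    lam a x ∈ gammaSub B n := by
  rw [lam_eq_starOp_add]
  exact add_mem (starOp_mem_gammaSub_of_mem_right a hx) hx

theorem mul_mul_inv_mem_gammaSub {n : ℕ} (a : B) {u : B} (hu : u ∈ gammaSub B n) :
    a * u * a⁻¹ ∈ gammaSub B n :=
  mul_mul_inv_mem_of_lam_mem (fun a _ => lam_mem_gammaSub a)
    (fun _ hx b => starOp_mem_gammaSub_of_mem_left hx b) a hu

theorem mul_mul_inv_mul_inv_mem_gammaSub_succ {n : ℕ} {x : B} (hx : x ∈ gammaSub B n) (g : B) :
    x * g * x⁻¹ * g⁻¹ ∈ gammaSub B (n + 1) := by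
  have hN := gammaSub_normal (B := B) (n + 1)
  have hdiff : -(g * x) + x * g ∈ gammaSub B (n + 1) := by
    have e : -(g * x) + x * g =
        (-x + -starOp g x + - -x) + (-x + -g - -x - -g) + (-g + starOp x g + - -g) := by
      simp only [mul_eq_add_lam, lam_eq_starOp_add, sub_eq_add_neg, neg_add_rev, neg_neg,
        add_assoc, add_neg_cancel_left]
    rw [e]
    refine add_mem (add_mem (hN.conj_mem _ (neg_mem ?_) _) ?_) (hN.conj_mem _ ?_ _)
    · simpa using starOp_mem_gammaSub (mem_gammaSub_zero _) hx
    · simpa using add_sub_sub_mem_gammaSub (neg_mem hx) (mem_gammaSub_zero (-g))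
    · simpa using starOp_mem_gammaSub hx (mem_gammaSub_zero _)
  have h := mul_inv_mem_of_neg_add_mem (fun a _ => lam_mem_gammaSub a)
    (fun a _ => mul_mul_inv_mem_gammaSub a) hdiff
  rwa [mul_inv_rev, ← mul_assoc] at h

def gammaMulSub (B : Type*) [SkewBrace B] (n : ℕ) : Subgroup B where
  carrier := gammaSub B n
  one_mem' := by
    rw [SetLike.mem_coe, one_eq_zero]
    exact zero_mem _
  mul_mem' := mul_mem_of_lam_mem fun a _ => lam_mem_gammaSub a
  inv_mem' := inv_mem_of_lam_mem fun a _ => lam_mem_gammaSub a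

theorem isDescendingCentralSeries_gammaMulSub :
    Subgroup.IsDescendingCentralSeries (gammaMulSub B) :=
  ⟨eq_top_iff.mpr fun x _ => mem_gammaSub_zero x, fun x _ hx g => by
    rw [commutatorElement_def]
    exact mul_mul_inv_mul_inv_mem_gammaSub_succ hx g⟩

theorem isNilpotent_of_gammaSub_eq_bot {n : ℕ} (h : gammaSub B n = ⊥) : Group.IsNilpotent B := by
  refine (Subgroup.nilpotent_iff_finite_descending_central_series B).mpr
    ⟨n, gammaMulSub B, isDescendingCentralSeries_gammaMulSub, eq_bot_iff.mpr fun x hx => ?_⟩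
  have hx0 : x ∈ gammaSub B n := hx
  rw [h, AddSubgroup.mem_bot] at hx0
  rw [Subgroup.mem_bot, hx0, one_eq_zero]

/-- `B⁽ᵏ⁺¹⁾` as an additive subgroup. -/
def rightPowSub (B : Type*) [SkewBrace B] (k : ℕ) : AddSubgroup B :=
  AddSubgroup.closure (rightPow B k)

theorem coe_rightPowSub (k : ℕ) : (rightPowSub B k : Set B) = rightPow B k := by
  cases k <;> simp [rightPowSub, rightPow, starSpan]

theorem rightPowSub_zero : rightPowSub B 0 = ⊤ :=
  SetLike.coe_injective (by rw [coe_rightPowSub, rightPow]; rfl)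

theorem rightPowSub_succ (k : ℕ) : rightPowSub B (k + 1) =
    AddSubgroup.closure {z : B | ∃ x ∈ rightPowSub B k, ∃ y : B, z = starOp x y} := by
  simp only [← SetLike.mem_coe, coe_rightPowSub]
  simp [rightPowSub, rightPow, starSpan]

theorem starOp_mem_rightPowSub_succ {k : ℕ} {x : B} (hx : x ∈ rightPowSub B k) (y : B) :
    starOp x y ∈ rightPowSub B (k + 1) := by
  rw [rightPowSub_succ]
  exact AddSubgroup.subset_closure ⟨x, hx, y, rfl⟩

theorem rightPowSub_succ_le_self (k : ℕ) : rightPowSub B (k + 1) ≤ rightPowSub B k := by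
  induction k with
  | zero => exact rightPowSub_zero (B := B) ▸ le_top
  | succ k ih =>
    rw [rightPowSub_succ (k + 1), AddSubgroup.closure_le]
    rintro _ ⟨x, hx, y, rfl⟩
    exact starOp_mem_rightPowSub_succ (ih hx) y

instance rightPowSub_normal (k : ℕ) : (rightPowSub B k).Normal := by
  cases k with
  | zero => rw [rightPowSub_zero]; infer_instance
  | succ k =>
    rw [rightPowSub_succ]
    refine AddSubgroup.normal_closure_of_add_neg_mem ?_
    rintro _ ⟨x, hx, y, rfl⟩ c
    rw [add_starOp_add_neg]
    exact add_mem (neg_mem (AddSubgroup.subset_closure ⟨x, hx, c, rfl⟩))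
      (AddSubgroup.subset_closure ⟨x, hx, c + y, rfl⟩)

/-- `λ`-invariance of `B⁽ᵏ⁺²⁾` needs invariance of `B⁽ᵏ⁺¹⁾` under conjugation in `(B,∘)`,
since `λ_a (x * y) = (a ∘ x ∘ a⁻¹) * λ_a y`. -/
theorem lam_mem_rightPowSub_and_mul_mul_inv_mem (k : ℕ) :
    (∀ a, ∀ x ∈ rightPowSub B k, lam a x ∈ rightPowSub B k) ∧
      ∀ a, ∀ x ∈ rightPowSub B k, a * x * a⁻¹ ∈ rightPowSub B k := by
  induction k with
  | zero => simp [rightPowSub_zero]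
  | succ k ih =>
    have hlam : ∀ a, ∀ x ∈ rightPowSub B (k + 1), lam a x ∈ rightPowSub B (k + 1) := by
      intro a x hx
      rw [rightPowSub_succ] at hx ⊢
      refine AddSubgroup.mem_comap.mp
        ((AddSubgroup.closure_le (AddSubgroup.comap (lamHom a) _)).mpr ?_ hx)
      rintro _ ⟨y, hy, z, rfl⟩
      rw [SetLike.mem_coe, AddSubgroup.mem_comap, lamHom_apply, lam_starOp]
      exact AddSubgroup.subset_closure ⟨_, ih.2 a y hy, _, rfl⟩
    exact ⟨hlam, fun a x hx => mul_mul_inv_mem_of_lam_mem hlam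
      (fun y hy b => rightPowSub_succ_le_self _ (starOp_mem_rightPowSub_succ hy b)) a hx⟩

theorem lam_mem_rightPowSub {k : ℕ} (a : B) {x : B} (hx : x ∈ rightPowSub B k) :
    lam a x ∈ rightPowSub B k :=
  (lam_mem_rightPowSub_and_mul_mul_inv_mem k).1 a x hx

theorem starOp_mem_leftPow_succ {p : ℕ} (b : B) {x : B} (hx : x ∈ leftPow B p) :
    starOp b x ∈ leftPow B (p + 1) :=
  AddSubgroup.subset_closure ⟨b, trivial, x, hx, rfl⟩

/-- The lower central series `γ_{j+1}` of `(B,+)`. -/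
def addLowerCentral (B : Type*) [SkewBrace B] (j : ℕ) : AddSubgroup B :=
  Subgroup.toAddSubgroup' (Subgroup.lowerCentralSeries (⊤ : Subgroup (Multiplicative B)) j)

theorem mem_addLowerCentral {j : ℕ} {x : B} : x ∈ addLowerCentral B j ↔
    Multiplicative.ofAdd x ∈ Subgroup.lowerCentralSeries (⊤ : Subgroup (Multiplicative B)) j :=
  Iff.rfl

theorem addLowerCentral_zero : addLowerCentral B 0 = ⊤ := by
  simp [addLowerCentral]

theorem addLowerCentral_antitone : Antitone (addLowerCentral B) :=
  fun _ _ h => Subgroup.toAddSubgroup'.monotone (Subgroup.lowerCentralSeries_antitone _ h)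

theorem add_sub_sub_mem_addLowerCentral_succ {j : ℕ} (c : B) {x : B}
    (hx : x ∈ addLowerCentral B j) : c + x - c - x ∈ addLowerCentral B (j + 1) := by
  rw [mem_addLowerCentral]
  have h := Subgroup.commutator_mem_commutator (Subgroup.mem_top (Multiplicative.ofAdd c))
    (mem_addLowerCentral.mp hx)
  rw [Subgroup.commutator_comm, commutatorElement_def] at h
  simpa [sub_eq_add_neg, add_assoc, mul_assoc] using h

theorem lam_mem_addLowerCentral {j : ℕ} (a : B) {x : B} (hx : x ∈ addLowerCentral B j) :
    lam a x ∈ addLowerCentral B j := by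
  have hmap : (Subgroup.lowerCentralSeries (⊤ : Subgroup (Multiplicative B)) j).map
      (lamHom a).toMultiplicative ≤ Subgroup.lowerCentralSeries ⊤ j := by
    rw [Subgroup.map_lowerCentralSeries]
    exact Subgroup.lowerCentralSeries_mono j le_top
  exact hmap ⟨_, mem_addLowerCentral.mp hx, rfl⟩

theorem exists_addLowerCentral_eq_bot (h : Group.IsNilpotent (Multiplicative B)) :
    ∃ c, addLowerCentral B c = ⊥ := by
  obtain ⟨c, hc⟩ := Subgroup.nilpotent_iff_lowerCentralSeries.mp h
  exact ⟨c, by rw [addLowerCentral, hc]; rfl⟩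

/-- Interpolates between `addLowerCentral B j` (at `p = 0`) and `addLowerCentral B (j + 1)`
(once `leftPow B p = 0`). -/
def lowerCentralLeftPow (B : Type*) [SkewBrace B] (j p : ℕ) : AddSubgroup B :=
  AddSubgroup.closure ((addLowerCentral B (j + 1) : Set B) ∪ (leftPow B p ∩ addLowerCentral B j))

theorem lowerCentralLeftPow_zero_zero : lowerCentralLeftPow B 0 0 = ⊤ :=
  eq_top_iff.mpr fun x _ => AddSubgroup.subset_closure
    (Or.inr ⟨trivial, addLowerCentral_zero (B := B) ▸ AddSubgroup.mem_top x⟩)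

instance lowerCentralLeftPow_normal (j p : ℕ) : (lowerCentralLeftPow B j p).Normal := by
  refine AddSubgroup.normal_closure_of_add_neg_mem fun s hs c => ?_
  have hs' : s ∈ addLowerCentral B j := by
    rcases hs with hs | hs
    · exact addLowerCentral_antitone (Nat.le_succ j) hs
    · exact hs.2
  have h : c + s - c - s + s ∈ lowerCentralLeftPow B j p :=
    add_mem (AddSubgroup.subset_closure (Or.inl (add_sub_sub_mem_addLowerCentral_succ c hs')))
      (AddSubgroup.subset_closure hs)
  rwa [sub_add_cancel, sub_eq_add_neg] at h

theorem starCommInto_lowerCentralLeftPow (j p : ℕ) :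
    StarCommInto (lowerCentralLeftPow B j p) (lowerCentralLeftPow B j (p + 1)) := by
  refine starCommInto_closure fun s hs b => ?_
  rcases hs with hs | ⟨hsp, hs⟩
  · exact ⟨AddSubgroup.subset_closure (Or.inl (sub_mem (lam_mem_addLowerCentral b hs) hs)),
      AddSubgroup.subset_closure (Or.inl (addLowerCentral_antitone (Nat.le_succ _)
        (add_sub_sub_mem_addLowerCentral_succ b hs)))⟩
  · exact ⟨AddSubgroup.subset_closure (Or.inr ⟨starOp_mem_leftPow_succ b hsp,
        sub_mem (lam_mem_addLowerCentral b hs) hs⟩),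
      AddSubgroup.subset_closure (Or.inl (add_sub_sub_mem_addLowerCentral_succ b hs))⟩

theorem lowerCentralLeftPow_le_succ_zero {L : ℕ} (hL : leftPow B L = {0}) (j : ℕ) :
    lowerCentralLeftPow B j L ≤ lowerCentralLeftPow B (j + 1) 0 := by
  refine AddSubgroup.closure_le _ |>.mpr ?_
  rintro s (hs | ⟨hs, -⟩)
  · exact AddSubgroup.subset_closure (Or.inr ⟨trivial, hs⟩)
  · rw [hL, Set.mem_singleton_iff] at hs
    exact hs ▸ zero_mem _

theorem lowerCentralLeftPow_eq_bot {c : ℕ} (hc : addLowerCentral B c = ⊥) :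
    lowerCentralLeftPow B c 0 = ⊥ := by
  refine eq_bot_iff.mpr (AddSubgroup.closure_le _ |>.mpr ?_)
  rintro s (hs | ⟨-, hs⟩)
  · exact hc ▸ addLowerCentral_antitone (Nat.le_succ c) hs
  · exact hc ▸ hs

theorem gammaSub_two_mul_add_one_le {A A' : AddSubgroup B} {m : ℕ} (hA : gammaSub B m ≤ A)
    (hAA' : StarCommInto A A') (hm : ∀ x ∈ gammaSub B m, ∀ y, starOp x y ∈ A') :
    gammaSub B (2 * m + 1) ≤ A' := by
  refine gammaSub_succ_le fun i hi x hx y hy => ?_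
  by_cases him : m ≤ i
  · have hxm : x ∈ gammaSub B m := gammaSub_antitone him hx
    refine ⟨hm x hxm y, ?_⟩
    have h := neg_mem (hAA' x (hA hxm) y).2
    rwa [show -(y + x - y - x) = x + y - x - y by
      simp only [sub_eq_add_neg, neg_add_rev, neg_neg, add_assoc]] at h
  · exact hAA' y (hA (gammaSub_antitone (by omega) hy)) x

theorem exists_gammaSub_le_of_starCommInto {A A' : AddSubgroup B} {u : ℕ}
    (hu : ∀ x ∈ gammaSub B u, ∀ y, starOp x y ∈ A') (hAA' : StarCommInto A A')
    (hA : ∃ n, gammaSub B n ≤ A) : ∃ n, gammaSub B n ≤ A' := by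
  obtain ⟨n, hn⟩ := hA
  exact ⟨2 * max n u + 1, gammaSub_two_mul_add_one_le
    ((gammaSub_antitone (le_max_left n u)).trans hn) hAA'
    fun x hx => hu x (gammaSub_antitone (le_max_right n u) hx)⟩

theorem exists_gammaSub_le_lowerCentralLeftPow_sup {R : AddSubgroup B} [R.Normal]
    (hR : StarCommInto R R) {u L : ℕ} (hu : ∀ x ∈ gammaSub B u, ∀ y, starOp x y ∈ R)
    (hL : leftPow B L = {0}) (j p : ℕ) :
    ∃ n, gammaSub B n ≤ lowerCentralLeftPow B j p ⊔ R := by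
  have hsteps : ∀ j, (∃ n, gammaSub B n ≤ lowerCentralLeftPow B j 0 ⊔ R) →
      ∀ p, ∃ n, gammaSub B n ≤ lowerCentralLeftPow B j p ⊔ R := by
    intro j h0 p
    induction p with
    | zero => exact h0
    | succ p ih =>
      exact exists_gammaSub_le_of_starCommInto
        (fun x hx y => AddSubgroup.mem_sup_right (hu x hx y))
        ((starCommInto_lowerCentralLeftPow j p).sup hR) ih
  induction j generalizing p with
  | zero => exact hsteps 0 ⟨0, by simp [gammaSub_zero, lowerCentralLeftPow_zero_zero]⟩ p
  | succ j ih =>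
    refine hsteps (j + 1) ?_ p
    obtain ⟨n, hn⟩ := ih L
    exact ⟨n, hn.trans (sup_le_sup_right (lowerCentralLeftPow_le_succ_zero hL j) R)⟩

theorem exists_gammaSub_le_rightPowSub (hnt : Group.IsNilpotent (Multiplicative B))
    (hl : LeftNilpotent B) (k : ℕ) : ∃ n, gammaSub B n ≤ rightPowSub B k := by
  obtain ⟨L, hL⟩ := hl
  obtain ⟨c, hc⟩ := exists_addLowerCentral_eq_bot hnt
  induction k with
  | zero => exact ⟨0, rightPowSub_zero (B := B) ▸ le_top⟩
  | succ k ih =>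
    obtain ⟨u, hu⟩ := ih
    obtain ⟨n, hn⟩ := exists_gammaSub_le_lowerCentralLeftPow_sup
      (starCommInto_self fun a _ => lam_mem_rightPowSub a)
      (fun x hx y => starOp_mem_rightPowSub_succ (hu hx) y) hL c 0
    rw [lowerCentralLeftPow_eq_bot hc, bot_sup_eq] at hn
    exact ⟨n, hn⟩

theorem exists_gammaSub_eq_bot (hnt : Group.IsNilpotent (Multiplicative B))
    (hl : LeftNilpotent B) (hr : RightNilpotent B) : ∃ n, gammaSub B n = ⊥ := by
  obtain ⟨k, hk⟩ := hr
  obtain ⟨n, hn⟩ := exists_gammaSub_le_rightPowSub hnt hl k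
  have hk' : rightPowSub B k = ⊥ := SetLike.coe_injective (by rw [coe_rightPowSub, hk]; rfl)
  exact ⟨n, eq_bot_iff.mpr (hk' ▸ hn)⟩

/-- Proposition 2.6: a skew brace of nilpotent type (i.e. `(B,+)` is a nilpotent
group) that is left and right nilpotent has nilpotent multiplicative group. -/
theorem stmt1 {B : Type*} [SkewBrace B]
    (hnt : Group.IsNilpotent (Multiplicative B))
    (hl : LeftNilpotent B) (hr : RightNilpotent B) :
    Group.IsNilpotent B := by
  obtain ⟨n, hn⟩ := exists_gammaSub_eq_bot hnt hl hr
  exact isNilpotent_of_gammaSub_eq_bot hn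

end SkewBrace
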